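/- The sum over k >= 0 of (H_{3k+1} - H_k) * (-1)^k / ((3k+1) * binomial(3k,k) * 4^{k+1}) equals the negative of the integral from 0 to 1 of ln(x) / ((x+1)(x² - 3x + 4)) dx. -/

import Mathlib

/-!
The summand is `-(-1)^k / 4^(k+1) * ∫₀¹ x^k (1-x)^(2k) log x`: the integrals
`∫₀¹ x^n (1-x)^m log x = -(n! m! / (n+m+1)!) (H_{n+m+1} - H_n)` (the derivative of the Beta
integral in its first parameter) follow by induction on `m` from `(1-x)^(m+1) = (1-x)^m - x (1-x)^m`.
Summing the geometric series in `-x(1-x)^2/4` under the integral gives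
`1 / (4 + x(1-x)^2) = 1 / ((x+1)(x^2-3x+4))`, and the interchange is dominated convergence with
dominating series `|log x| / 4 * Σ 4^(-k)`.
-/

open Real MeasureTheory intervalIntegral Set
open scoped Nat Interval

lemma continuous_pow_succ_mul_log (n : ℕ) : Continuous fun x : ℝ => x ^ (n + 1) * log x := by
  simp only [pow_succ, mul_assoc]
  exact (continuous_pow n).mul continuous_mul_log

lemma intervalIntegrable_pow_mul_one_sub_pow_mul_log (n m : ℕ) (a b : ℝ) :
    IntervalIntegrable (fun x : ℝ => x ^ n * (1 - x) ^ m * log x) volume a b :=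
  intervalIntegrable_log'.continuousOn_mul (by fun_prop)

lemma integral_pow_mul_log (n : ℕ) :
    ∫ x in (0:ℝ)..1, x ^ n * log x = -1 / ((n : ℝ) + 1) ^ 2 := by
  have hderiv : ∀ x ∈ Ioo (0:ℝ) 1, HasDerivAt
      (fun y => y ^ (n + 1) * log y / (n + 1) - y ^ (n + 1) / (n + 1) ^ 2) (x ^ n * log x) x := by
    intro x hx
    have hpow : HasDerivAt (fun y : ℝ => y ^ (n + 1)) ((n + 1) * x ^ n) x := by
      simpa using hasDerivAt_pow (n + 1) x
    refine (((hpow.fun_mul (hasDerivAt_log hx.1.ne')).div_const ((n : ℝ) + 1)).fun_sub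
      (hpow.div_const (((n : ℝ) + 1) ^ 2))).congr_deriv ?_
    field_simp [hx.1.ne']
    ring
  rw [integral_eq_sub_of_hasDerivAt_of_le zero_le_one
    (((continuous_pow_succ_mul_log n).div_const _).sub
      ((continuous_pow _).div_const _)).continuousOn hderiv
    (by simpa using intervalIntegrable_pow_mul_one_sub_pow_mul_log n 0 0 1)]
  simp only [Pi.sub_apply, one_pow, log_one, zero_pow (Nat.succ_ne_zero n)]
  ring

theorem integral_pow_mul_one_sub_pow_mul_log (n m : ℕ) :
    ∫ x in (0:ℝ)..1, x ^ n * (1 - x) ^ m * log x =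
      -(n ! * m ! / (n + m + 1)! : ℝ) * (harmonic (n + m + 1) - harmonic n : ℝ) := by
  induction m generalizing n with
  | zero =>
    simp only [pow_zero, mul_one, add_zero, integral_pow_mul_log, Nat.factorial_zero,
      Nat.factorial_succ n, harmonic_succ n]
    push_cast
    field_simp
    ring
  | succ m ih =>
    have hsplit : (fun x : ℝ => x ^ n * (1 - x) ^ (m + 1) * log x) =
        fun x => x ^ n * (1 - x) ^ m * log x - x ^ (n + 1) * (1 - x) ^ m * log x := by
      funext x; ring
    rw [hsplit, integral_sub (intervalIntegrable_pow_mul_one_sub_pow_mul_log n m 0 1)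
      (intervalIntegrable_pow_mul_one_sub_pow_mul_log (n + 1) m 0 1), ih n, ih (n + 1),
      show n + 1 + m + 1 = n + m + 1 + 1 by ring, show n + (m + 1) + 1 = n + m + 1 + 1 by ring,
      Nat.factorial_succ (n + m + 1), Nat.factorial_succ n, Nat.factorial_succ m,
      harmonic_succ (n + m + 1), harmonic_succ n]
    push_cast
    field_simp
    ring

lemma factorial_mul_factorial_div_factorial_succ (n m : ℕ) :
    (n ! * m ! / (n + m + 1)! : ℝ) = 1 / ((n + m + 1) * (n + m).choose n) := by
  rw [Nat.factorial_succ, ← Nat.add_choose_mul_factorial_mul_factorial n m, Nat.choose_symm_add]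
  push_cast
  field_simp

lemma integral_pow_mul_one_sub_pow_two_mul_mul_log (k : ℕ) :
    ∫ x in (0:ℝ)..1, x ^ k * (1 - x) ^ (2 * k) * log x =
      -((harmonic (3 * k + 1) : ℝ) - harmonic k) / ((3 * k + 1) * (3 * k).choose k) := by
  rw [integral_pow_mul_one_sub_pow_mul_log, factorial_mul_factorial_div_factorial_succ,
    show k + 2 * k = 3 * k by ring]
  push_cast
  ring

lemma norm_mul_one_sub_sq_div_four_le {x : ℝ} (hx : x ∈ Icc (0:ℝ) 1) :
    ‖-(x * (1 - x) ^ 2) / 4‖ ≤ 1 / 4 := by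
  have h0 : 0 ≤ x * (1 - x) ^ 2 := mul_nonneg hx.1 (sq_nonneg _)
  have h1 : x * (1 - x) ^ 2 ≤ 1 :=
    mul_le_one₀ hx.2 (sq_nonneg _) (pow_le_one₀ (by linarith [hx.2]) (by linarith [hx.1]))
  rw [norm_div, norm_neg, Real.norm_of_nonneg h0, Real.norm_ofNat]
  linarith

lemma neg_one_pow_div_four_pow_mul_log_eq (k : ℕ) (x : ℝ) :
    (-1) ^ k / 4 ^ (k + 1) * (x ^ k * (1 - x) ^ (2 * k) * log x) =
      log x / 4 * (-(x * (1 - x) ^ 2) / 4) ^ k := by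
  rw [div_pow, neg_pow (x * (1 - x) ^ 2), mul_pow, ← pow_mul, pow_succ]
  ring

lemma hasSum_neg_one_pow_div_four_pow_mul_log {x : ℝ} (hx : x ∈ Icc (0:ℝ) 1) :
    HasSum (fun k : ℕ => (-1) ^ k / 4 ^ (k + 1) * (x ^ k * (1 - x) ^ (2 * k) * log x))
      (log x / ((x + 1) * (x ^ 2 - 3 * x + 4))) := by
  have hratio : ‖-(x * (1 - x) ^ 2) / 4‖ < 1 := by
    linarith [norm_mul_one_sub_sq_div_four_le hx]
  have hsum : log x / ((x + 1) * (x ^ 2 - 3 * x + 4)) =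
      log x / 4 * (1 - -(x * (1 - x) ^ 2) / 4)⁻¹ := by
    have : 0 < (x + 1) * (x ^ 2 - 3 * x + 4) := by nlinarith [hx.1, sq_nonneg (x - 3 / 2)]
    field_simp
    ring
  simp_rw [neg_one_pow_div_four_pow_mul_log_eq, hsum]
  exact (hasSum_geometric_of_norm_lt_one hratio).mul_left _

theorem hasSum_integral_neg_one_pow_div_four_pow_mul_log :
    HasSum
      (fun k : ℕ => ∫ x in (0:ℝ)..1, (-1) ^ k / 4 ^ (k + 1) * (x ^ k * (1 - x) ^ (2 * k) * log x))
      (∫ x in (0:ℝ)..1, log x / ((x + 1) * (x ^ 2 - 3 * x + 4))) := by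
  have hIcc {x : ℝ} (hx : x ∈ Ι (0:ℝ) 1) : x ∈ Icc (0:ℝ) 1 :=
    Ioc_subset_Icc_self (uIoc_of_le (zero_le_one' ℝ) ▸ hx)
  refine intervalIntegral.hasSum_integral_of_dominated_convergence
    (fun k x => ‖log x / 4‖ * (1 / 4) ^ k)
    (fun k => ((intervalIntegrable_pow_mul_one_sub_pow_mul_log k (2 * k) 0 1).const_mul
      ((-1) ^ k / 4 ^ (k + 1))).def'.aestronglyMeasurable)
    (fun k => .of_forall fun x hx => ?_)
    (.of_forall fun x _ => (summable_geometric_of_lt_one (by norm_num) (by norm_num)).mul_left _)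
    ?_
    (.of_forall fun x hx => hasSum_neg_one_pow_div_four_pow_mul_log (hIcc hx))
  · rw [neg_one_pow_div_four_pow_mul_log_eq, norm_mul, norm_pow]
    gcongr
    exact norm_mul_one_sub_sq_div_four_le (hIcc hx)
  · simp_rw [tsum_mul_left]
    exact (intervalIntegrable_log'.div_const 4).norm.mul_const _

theorem stmt_11 :
    ∑' k : ℕ, ((harmonic (3 * k + 1) : ℝ) - (harmonic k : ℝ)) * (-1) ^ k /
        ((3 * k + 1) * (Nat.choose (3 * k) k : ℝ) * 4 ^ (k + 1)) =
      -∫ x in (0:ℝ)..1, Real.log x / ((x + 1) * (x ^ 2 - 3 * x + 4)) := by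
  have hterm (k : ℕ) : ((harmonic (3 * k + 1) : ℝ) - (harmonic k : ℝ)) * (-1) ^ k /
        ((3 * k + 1) * (Nat.choose (3 * k) k : ℝ) * 4 ^ (k + 1)) =
      -∫ x in (0:ℝ)..1, (-1) ^ k / 4 ^ (k + 1) * (x ^ k * (1 - x) ^ (2 * k) * log x) := by
    rw [intervalIntegral.integral_const_mul, integral_pow_mul_one_sub_pow_two_mul_mul_log]
    field_simp
  rw [tsum_congr hterm, tsum_neg, hasSum_integral_neg_one_pow_div_four_pow_mul_log.tsum_eq]
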